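/- Let ρ, σ, ω be states on ℂ^d, let M > 1 be real and let ε be real with 0 ≤ ε < 1 − 1/M. Assume ½‖ρ − σ‖₁ ≤ ε and ρ ≤ Mω. Then ∫_{γ ∈ (1, M]} (E_γ(ρ‖ω) − E_γ(σ‖ω))/γ dγ ≤ −(1−ε)·log(1−ε) + ε·log M − ε, and moreover E_γ(ρ‖ω) − E_γ(σ‖ω) ≤ 0 for every γ ≥ M. -/

import Mathlib

noncomputable section

namespace QIT

open Matrix
open scoped ComplexOrder

variable {n : Type*} [Fintype n] [DecidableEq n]

/-- Trace norm of a matrix: sum of absolute values of eigenvalues (0 if not Hermitian). -/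
def traceNorm (X : Matrix n n ℂ) : ℝ :=
  if h : X.IsHermitian then ∑ i, |h.eigenvalues i| else 0

/-- Trace of the positive part: sum of positive eigenvalues (0 if not Hermitian). -/
def trPos (X : Matrix n n ℂ) : ℝ :=
  if h : X.IsHermitian then ∑ i, max (h.eigenvalues i) 0 else 0

/-- Matrix logarithm via functional calculus (with log 0 = 0); 0 if not Hermitian. -/
def mlog (X : Matrix n n ℂ) : Matrix n n ℂ :=
  if h : X.IsHermitian then
    (h.eigenvectorUnitary : Matrix n n ℂ) *
      Matrix.diagonal (fun i => (Real.log (h.eigenvalues i) : ℂ)) *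
      (star (h.eigenvectorUnitary : Matrix n n ℂ))
  else 0

/-- Umegaki relative entropy D(ρ‖ω) = Tr ρ (log ρ - log ω). -/
def relEnt (ρ ω : Matrix n n ℂ) : ℝ :=
  ((ρ * (mlog ρ - mlog ω)).trace).re

/-- Von Neumann entropy. -/
def vN (ρ : Matrix n n ℂ) : ℝ :=
  if h : ρ.IsHermitian then -∑ i, (h.eigenvalues i) * Real.log (h.eigenvalues i) else 0

/-- A quantum state: positive semidefinite with unit trace. -/
def IsState (ρ : Matrix n n ℂ) : Prop := ρ.PosSemidef ∧ ρ.trace = 1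

/-- Binary entropy. -/
def binH (ε : ℝ) : ℝ := -(ε * Real.log ε) - (1 - ε) * Real.log (1 - ε)

/-- g(x) = (1+x)log(1+x) - x log x. -/
def gfun (x : ℝ) : ℝ := (1 + x) * Real.log (1 + x) - x * Real.log x

/-
The variational formula `trPos A = max {Re Tr (A P) | 0 ≤ P ≤ 1}` makes `trPos` monotone and
subadditive. Hence `Δ γ = E_γ(ρ‖ω) - E_γ(σ‖ω)` is at most `trPos (ρ - σ) = ‖ρ - σ‖₁ / 2 ≤ ε`, and
`ρ - γω ≤ (1 - γ/M) ρ` bounds it by `1 - γ/M` on `[0, M]` and by `0` beyond `M`. Integrating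
`min ε (1 - γ/M) / γ` over `(1, M]`, split at `γ = M (1 - ε)`, gives the bound; `Δ` is continuous
because `γ ↦ E_γ(ρ‖ω)` is `1`-Lipschitz.
-/

lemma isHermitian_ofReal_smul {m : Type*} {A : Matrix m m ℂ} (hA : A.IsHermitian) (c : ℝ) :
    ((c : ℂ) • A).IsHermitian :=
  hA.smul (Complex.conj_ofReal c)

lemma posSemidef_ofReal_smul {m : Type*} {A : Matrix m m ℂ} (hA : A.PosSemidef) {c : ℝ}
    (hc : 0 ≤ c) : ((c : ℂ) • A).PosSemidef :=
  hA.smul (Complex.zero_le_real.mpr hc)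

lemma trPos_zero : trPos (0 : Matrix n n ℂ) = 0 := by
  simp [trPos, Matrix.isHermitian_zero.eigenvalues_eq_zero_iff.mpr rfl]

lemma trPos_nonneg (A : Matrix n n ℂ) : 0 ≤ trPos A := by
  unfold trPos
  split
  · exact Finset.sum_nonneg fun i _ => le_max_right _ _
  · exact le_rfl

lemma trace_mul_eq_sum_eigenvalues_mul {A : Matrix n n ℂ} (hA : A.IsHermitian)
    (P : Matrix n n ℂ) :
    (A * P).trace = ∑ i, (hA.eigenvalues i : ℂ) *
      (star (hA.eigenvectorUnitary : Matrix n n ℂ) * P * hA.eigenvectorUnitary) i i := by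
  set U : Matrix n n ℂ := (hA.eigenvectorUnitary : Matrix n n ℂ)
  conv_lhs => rw [hA.spectral_theorem, Unitary.conjStarAlgAut_apply]
  rw [show U * diagonal (RCLike.ofReal ∘ hA.eigenvalues) * star U * P
      = U * (diagonal (RCLike.ofReal ∘ hA.eigenvalues) * (star U * P)) by
        simp only [Matrix.mul_assoc],
    Matrix.trace_mul_comm, Matrix.mul_assoc]
  simp only [Matrix.trace, Matrix.diag, Matrix.diagonal_mul, Function.comp_apply,
    Matrix.mul_assoc]
  rfl

lemma re_trace_mul_le_trPos {A P : Matrix n n ℂ} (hA : A.IsHermitian)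
    (hP : P.PosSemidef) (hP1 : (1 - P).PosSemidef) :
    ((A * P).trace).re ≤ trPos A := by
  set U : Matrix n n ℂ := (hA.eigenvectorUnitary : Matrix n n ℂ)
  have hUU : star U * U = 1 := Matrix.mem_unitaryGroup_iff'.mp hA.eigenvectorUnitary.2
  have hQ : (star U * P * U).PosSemidef := hP.conjTranspose_mul_mul_same U
  have hQ1 : (1 - star U * P * U).PosSemidef := by
    rw [show 1 - star U * P * U = star U * (1 - P) * U by
      rw [Matrix.mul_sub, Matrix.sub_mul, Matrix.mul_one, hUU]]
    exact hP1.conjTranspose_mul_mul_same U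
  rw [trPos, dif_pos hA, trace_mul_eq_sum_eigenvalues_mul hA, Complex.re_sum]
  refine Finset.sum_le_sum fun i _ => ?_
  have hq0 : 0 ≤ (star U * P * U) i i := hQ.diag_nonneg
  have hq1 : (star U * P * U) i i ≤ 1 := by
    simpa [sub_nonneg] using hQ1.diag_nonneg (i := i)
  rw [Complex.re_ofReal_mul]
  rcases le_total (hA.eigenvalues i) 0 with h | h
  · exact (mul_nonpos_of_nonpos_of_nonneg h (Complex.le_def.mp hq0).1).trans (le_max_right _ _)
  · exact (mul_le_of_le_one_right h (by simpa using (Complex.le_def.mp hq1).1)).trans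
      (le_max_left _ _)

lemma exists_re_trace_mul_eq_trPos {A : Matrix n n ℂ} (hA : A.IsHermitian) :
    ∃ P : Matrix n n ℂ, P.PosSemidef ∧ (1 - P).PosSemidef ∧ ((A * P).trace).re = trPos A := by
  set U : Matrix n n ℂ := (hA.eigenvectorUnitary : Matrix n n ℂ) with hU
  have hUU : star U * U = 1 := Matrix.mem_unitaryGroup_iff'.mp hA.eigenvectorUnitary.2
  have hUU' : U * star U = 1 := Matrix.mem_unitaryGroup_iff.mp hA.eigenvectorUnitary.2
  -- the spectral projection onto the positive eigenvalues
  set p : n → ℂ := fun i => if 0 < hA.eigenvalues i then 1 else 0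
  have hp : ∀ i, 0 ≤ p i ∧ p i ≤ 1 := fun i => by
    by_cases h : 0 < hA.eigenvalues i <;> simp [p, h]
  refine ⟨U * diagonal p * star U, ?_, ?_, ?_⟩
  · exact (posSemidef_diagonal_iff.mpr fun i => (hp i).1).mul_mul_conjTranspose_same U
  · rw [show 1 - U * diagonal p * star U = U * diagonal (1 - p) * star U by
      rw [show diagonal (1 - p) = 1 - diagonal p by rw [← diagonal_one, diagonal_sub]; rfl,
        Matrix.mul_sub, Matrix.sub_mul, Matrix.mul_one, hUU']]
    exact (posSemidef_diagonal_iff.mpr fun i => sub_nonneg.mpr (hp i).2).mul_mul_conjTranspose_same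
      U
  · have hconj : star U * (U * diagonal p * star U) * U = diagonal p := by
      rw [← Matrix.mul_assoc, ← Matrix.mul_assoc, hUU, Matrix.one_mul, Matrix.mul_assoc, hUU,
        Matrix.mul_one]
    rw [trace_mul_eq_sum_eigenvalues_mul hA, ← hU, hconj, trPos, dif_pos hA, Complex.re_sum]
    refine Finset.sum_congr rfl fun i _ => ?_
    by_cases h : 0 < hA.eigenvalues i
    · simp [p, h, h.le]
    · simp [p, h, not_lt.mp h]

lemma re_trace_mul_nonneg {A P : Matrix n n ℂ} (hA : A.PosSemidef) (hP : P.PosSemidef) :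
    0 ≤ ((A * P).trace).re := by
  rw [trace_mul_eq_sum_eigenvalues_mul hA.1, Complex.re_sum]
  refine Finset.sum_nonneg fun i _ => ?_
  rw [Complex.re_ofReal_mul]
  exact mul_nonneg (hA.eigenvalues_nonneg i)
    (Complex.le_def.mp (hP.conjTranspose_mul_mul_same _).diag_nonneg).1

lemma trPos_mono {A B : Matrix n n ℂ} (hA : A.IsHermitian) (hB : B.IsHermitian)
    (hAB : (B - A).PosSemidef) : trPos A ≤ trPos B := by
  obtain ⟨P, hP, hP1, hAP⟩ := exists_re_trace_mul_eq_trPos hA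
  have h : 0 ≤ (((B - A) * P).trace).re := re_trace_mul_nonneg hAB hP
  rw [Matrix.sub_mul, Matrix.trace_sub, Complex.sub_re] at h
  linarith [re_trace_mul_le_trPos hB hP hP1]

lemma trPos_add_le {A B : Matrix n n ℂ} (hA : A.IsHermitian) (hB : B.IsHermitian) :
    trPos (A + B) ≤ trPos A + trPos B := by
  obtain ⟨P, hP, hP1, hABP⟩ := exists_re_trace_mul_eq_trPos (hA.add hB)
  rw [← hABP, Matrix.add_mul, Matrix.trace_add, Complex.add_re]
  exact add_le_add (re_trace_mul_le_trPos hA hP hP1) (re_trace_mul_le_trPos hB hP hP1)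

lemma trPos_eq_re_trace_of_posSemidef {A : Matrix n n ℂ} (hA : A.PosSemidef) :
    trPos A = A.trace.re := by
  rw [trPos, dif_pos hA.1, hA.1.trace_eq_sum_eigenvalues, Complex.re_sum]
  exact Finset.sum_congr rfl fun i _ => by simp [hA.eigenvalues_nonneg i]

lemma trPos_eq_traceNorm_div_two {A : Matrix n n ℂ} (hA : A.IsHermitian) (h0 : A.trace = 0) :
    trPos A = traceNorm A / 2 := by
  have hsum : ∑ i, hA.eigenvalues i = 0 := by
    have h := hA.trace_eq_sum_eigenvalues
    rw [h0, ← RCLike.ofReal_sum] at h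
    exact RCLike.ofReal_eq_zero.mp h.symm
  rw [trPos, traceNorm, dif_pos hA, dif_pos hA, Finset.sum_div]
  have hmax : ∀ x : ℝ, max x 0 = x / 2 + |x| / 2 := fun x => by
    cases abs_cases x <;> cases max_cases x 0 <;> linarith
  simp only [hmax, Finset.sum_add_distrib, ← Finset.sum_div, hsum, zero_div, zero_add]

lemma IsState.trPos_ofReal_smul {ρ : Matrix n n ℂ} (hρ : IsState ρ) {c : ℝ} (hc : 0 ≤ c) :
    trPos ((c : ℂ) • ρ) = c := by
  rw [trPos_eq_re_trace_of_posSemidef (posSemidef_ofReal_smul hρ.1 hc), Matrix.trace_smul, hρ.2,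
    smul_eq_mul, mul_one, Complex.ofReal_re]

lemma trPos_sub_sub_trPos_sub_le {A B X : Matrix n n ℂ} (hA : A.IsHermitian)
    (hB : B.IsHermitian) (hX : X.IsHermitian) (htr : A.trace = B.trace) :
    trPos (A - X) - trPos (B - X) ≤ traceNorm (A - B) / 2 := by
  have h := trPos_add_le (hB.sub hX) (hA.sub hB)
  rw [sub_add_sub_cancel',
    trPos_eq_traceNorm_div_two (hA.sub hB) (by rw [trace_sub, htr, sub_self])] at h
  linarith

section SubSmul

variable {A ω : Matrix n n ℂ}

lemma antitone_trPos_sub_smul (hA : A.IsHermitian) (hω : ω.PosSemidef) :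
    Antitone fun γ : ℝ => trPos (A - (γ : ℂ) • ω) := by
  intro γ₁ γ₂ h
  refine trPos_mono (hA.sub (isHermitian_ofReal_smul hω.1 γ₂))
    (hA.sub (isHermitian_ofReal_smul hω.1 γ₁)) ?_
  convert posSemidef_ofReal_smul hω (sub_nonneg.mpr h) using 1
  push_cast
  module

lemma lipschitzWith_trPos_sub_smul (hA : A.IsHermitian) (hω : IsState ω) :
    LipschitzWith 1 fun γ : ℝ => trPos (A - (γ : ℂ) • ω) := by
  refine LipschitzWith.of_le_add fun x y => ?_
  rcases le_total x y with h | h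
  · calc trPos (A - (x : ℂ) • ω)
        = trPos ((A - (y : ℂ) • ω) + ((y - x : ℝ) : ℂ) • ω) := by push_cast; congr 1; module
      _ ≤ trPos (A - (y : ℂ) • ω) + trPos (((y - x : ℝ) : ℂ) • ω) :=
          trPos_add_le (hA.sub (isHermitian_ofReal_smul hω.1.1 y))
            (isHermitian_ofReal_smul hω.1.1 _)
      _ = trPos (A - (y : ℂ) • ω) + dist x y := by
          rw [hω.trPos_ofReal_smul (sub_nonneg.mpr h), Real.dist_eq, abs_sub_comm,
            abs_of_nonneg (sub_nonneg.mpr h)]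
  · exact (antitone_trPos_sub_smul hA hω.1 h).trans (le_add_of_nonneg_right dist_nonneg)

lemma trPos_sub_smul_eq_zero {M γ : ℝ} (hA : A.IsHermitian) (hω : ω.PosSemidef)
    (hop : ((M : ℂ) • ω - A).PosSemidef) (hγ : M ≤ γ) : trPos (A - (γ : ℂ) • ω) = 0 := by
  refine le_antisymm ?_ (trPos_nonneg _)
  rw [← trPos_zero (n := n)]
  refine trPos_mono (hA.sub (isHermitian_ofReal_smul hω.1 γ)) isHermitian_zero ?_
  convert hop.add (posSemidef_ofReal_smul hω (sub_nonneg.mpr hγ)) using 1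
  push_cast
  module

end SubSmul

lemma IsState.trPos_sub_smul_le {ρ ω : Matrix n n ℂ} {M γ : ℝ} (hρ : IsState ρ)
    (hω : ω.IsHermitian) (hM : 0 < M) (hop : ((M : ℂ) • ω - ρ).PosSemidef) (hγ : 0 ≤ γ)
    (hγM : γ ≤ M) : trPos (ρ - (γ : ℂ) • ω) ≤ 1 - γ / M := by
  have hc : 0 ≤ 1 - γ / M := sub_nonneg.mpr ((div_le_one hM).mpr hγM)
  rw [← hρ.trPos_ofReal_smul hc]
  refine trPos_mono (hρ.1.1.sub (isHermitian_ofReal_smul hω γ))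
    (isHermitian_ofReal_smul hρ.1.1 _) ?_
  -- `(1 - γ/M) ρ - (ρ - γω) = (γ/M) (Mω - ρ)`
  convert posSemidef_ofReal_smul hop (div_nonneg hγ hM.le) using 1
  have hM' : (M : ℂ) ≠ 0 := Complex.ofReal_ne_zero.mpr hM.ne'
  push_cast
  rw [smul_sub, smul_smul, div_mul_cancel₀ _ hM']
  module

open MeasureTheory Set

lemma integrableOn_Ioc_div_self {g : ℝ → ℝ} {a b : ℝ} (hg : ContinuousOn g (Icc a b))
    (ha : 0 < a) : IntegrableOn (fun x => g x / x) (Ioc a b) :=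
  ((hg.div continuousOn_id fun _ hx => (ha.trans_le hx.1).ne').integrableOn_Icc).mono_set
    Ioc_subset_Icc_self

lemma integral_inv_sub_inv {a b : ℝ} (ha : 0 < a) (hab : a ≤ b) :
    ∫ x in a..b, (x⁻¹ - b⁻¹) = Real.log (b / a) - (b - a) / b := by
  have hinv : IntervalIntegrable (fun x : ℝ => x⁻¹) volume a b := by
    refine intervalIntegral.intervalIntegrable_inv (fun x hx => ?_) continuousOn_id
    rw [uIcc_of_le hab] at hx
    exact (ha.trans_le hx.1).ne'
  rw [intervalIntegral.integral_sub hinv intervalIntegrable_const,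
    integral_inv_of_pos ha (ha.trans_le hab), intervalIntegral.integral_const, smul_eq_mul,
    div_eq_mul_inv (b - a)]

lemma integral_Ioc_min_div_self {ε M : ℝ} (hε : 0 ≤ ε) (hM : 0 < M) (ht : 1 ≤ M * (1 - ε)) :
    ∫ γ in Ioc 1 M, min ε (1 - γ / M) / γ = -(1 - ε) * Real.log (1 - ε) + ε * Real.log M - ε := by
  set t := M * (1 - ε)
  have ht0 : 0 < t := one_pos.trans_le ht
  have htM : t ≤ M := mul_le_of_le_one_right hM.le (by linarith)
  have h1ε : 0 < 1 - ε := pos_of_mul_pos_right ht0 hM.le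
  have hcont : ContinuousOn (fun γ => min ε (1 - γ / M) / γ) (uIcc 1 M) := by
    refine ContinuousOn.div (by fun_prop) continuousOn_id fun x hx => ?_
    rw [uIcc_of_le (ht.trans htM)] at hx
    exact (one_pos.trans_le hx.1).ne'
  have htmem : t ∈ uIcc 1 M := mem_uIcc_of_le ht htM
  have hleft : ∫ γ in (1 : ℝ)..t, min ε (1 - γ / M) / γ = ε * Real.log t := by
    rw [intervalIntegral.integral_congr (g := fun γ => ε * γ⁻¹) fun γ hγ => ?_,
      intervalIntegral.integral_const_mul, integral_inv_of_pos one_pos ht0, div_one]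
    rw [uIcc_of_le ht] at hγ
    rw [min_eq_left, div_eq_mul_inv]
    rw [le_sub_comm, div_le_iff₀ hM]
    linarith [hγ.2]
  have hright : ∫ γ in t..M, min ε (1 - γ / M) / γ = Real.log (M / t) - (M - t) / M := by
    rw [← integral_inv_sub_inv ht0 htM]
    refine intervalIntegral.integral_congr fun γ hγ => ?_
    rw [uIcc_of_le htM] at hγ
    have hγ0 : 0 < γ := ht0.trans_le hγ.1
    rw [min_eq_right]
    · field_simp
    · rw [sub_le_comm, le_div_iff₀ hM]
      linarith [hγ.1]
  rw [← intervalIntegral.integral_of_le (ht.trans htM),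
    ← intervalIntegral.integral_add_adjacent_intervals
      (hcont.mono (uIcc_subset_uIcc left_mem_uIcc htmem)).intervalIntegrable
      (hcont.mono (uIcc_subset_uIcc htmem right_mem_uIcc)).intervalIntegrable,
    hleft, hright, Real.log_div hM.ne' ht0.ne', Real.log_mul hM.ne' h1ε.ne']
  field_simp
  ring

open MeasureTheory in
/-- bound on the first integral in the proof of the semi-continuity theorem. -/
theorem first_integral_bound
    {d : ℕ} (ρ σ ω : Matrix (Fin d) (Fin d) ℂ)
    (hρ : IsState ρ) (hσ : IsState σ) (hω : IsState ω)
    (M ε : ℝ) (hM : 1 < M) (hε0 : 0 ≤ ε) (hε1 : ε < 1 - 1 / M)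
    (htr : traceNorm (ρ - σ) / 2 ≤ ε)
    (hop : ((M : ℂ) • ω - ρ).PosSemidef) :
    (∫ γ in Set.Ioc (1 : ℝ) M,
        (trPos (ρ - (γ : ℂ) • ω) - trPos (σ - (γ : ℂ) • ω)) / γ)
      ≤ -(1 - ε) * Real.log (1 - ε) + ε * Real.log M - ε ∧
    ∀ γ : ℝ, M ≤ γ →
      trPos (ρ - (γ : ℂ) • ω) - trPos (σ - (γ : ℂ) • ω) ≤ 0 := by
  have hM0 : 0 < M := by linarith
  have hMε : 1 ≤ M * (1 - ε) := by
    have h := lt_sub_comm.mp hε1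
    rw [div_lt_iff₀ hM0] at h
    linarith
  set Δ : ℝ → ℝ := fun γ => trPos (ρ - (γ : ℂ) • ω) - trPos (σ - (γ : ℂ) • ω)
  have hΔ : ∀ γ, 0 ≤ γ → γ ≤ M → Δ γ ≤ min ε (1 - γ / M) := fun γ hγ hγM =>
    le_min ((trPos_sub_sub_trPos_sub_le hρ.1.1 hσ.1.1 (isHermitian_ofReal_smul hω.1.1 γ)
        (hρ.2.trans hσ.2.symm)).trans htr)
      (by linarith [hρ.trPos_sub_smul_le hω.1.1 hM0 hop hγ hγM, trPos_nonneg (σ - (γ : ℂ) • ω)])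
  have hΔcont : Continuous Δ := (lipschitzWith_trPos_sub_smul hρ.1.1 hω).continuous.sub
    (lipschitzWith_trPos_sub_smul hσ.1.1 hω).continuous
  refine ⟨?_, fun γ hγ => ?_⟩
  · calc ∫ γ in Ioc 1 M, Δ γ / γ ≤ ∫ γ in Ioc 1 M, min ε (1 - γ / M) / γ :=
          setIntegral_mono_on (integrableOn_Ioc_div_self hΔcont.continuousOn one_pos)
            (integrableOn_Ioc_div_self (by fun_prop) one_pos) measurableSet_Ioc
            fun γ hγ => div_le_div_of_nonneg_right (hΔ γ (by linarith [hγ.1]) hγ.2)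
              (by linarith [hγ.1])
      _ = -(1 - ε) * Real.log (1 - ε) + ε * Real.log M - ε :=
          integral_Ioc_min_div_self hε0 hM0 hMε
  · rw [trPos_sub_smul_eq_zero hρ.1.1 hω.1 hop hγ]
    linarith [trPos_nonneg (σ - (γ : ℂ) • ω)]

end QIT
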